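/- For the always synchronizing objective in an MDP, the three winning modes coincide: the set of initial distributions that are sure winning, almost-sure winning, and limit-sure winning for always synchronizing in T (with function sum_T) are equal. -/

import Mathlib

/-!
An almost-sure strategy is already sure, since the mass in `T` never exceeds `1`. For limit-sure
winning, iterate `S ↦ T ∩ Pre(S)` from the whole state space down to its fixpoint `W`. If the
initial distribution is supported in `W`, always playing an action whose successors stay in `W`
is sure winning. Otherwise some initial state `q₀` lies outside the `N`-th iterate, and against
every strategy the path that repeatedly takes an action of weight at least `1/|A|` and a successor
outside the next smaller iterate leaves `T` within `N` steps with probability at least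
`μ₀(q₀) (η/|A|)^N`, where `η` is the least positive transition probability. That bound does not
depend on the strategy, so `μ₀` is not limit-sure winning either.
-/

open Finset

structure MDP (Q A : Type) [Fintype Q] [Fintype A] where
  δ : Q → A → Q → ℝ
  nonneg : ∀ q a q', 0 ≤ δ q a q'
  sum_one : ∀ q a, ∑ q', δ q a q' = 1

structure Strat (Q A : Type) [Fintype A] where
  σ : List Q → A → ℝ
  nonneg : ∀ h a, 0 ≤ σ h a
  sum_one : ∀ h, ∑ a, σ h a = 1

variable {Q A : Type} [Fintype Q] [DecidableEq Q] [Fintype A]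

/-- Probability of a path of length `n` (i.e. `n+1` states) from initial
distribution `μ0` under strategy `α`. The history passed to the strategy is
the list of visited states, most recent first. -/
noncomputable def pathProb (M : MDP Q A) (μ0 : Q → ℝ) (α : Strat Q A)
    {n : ℕ} (π : Fin (n + 1) → Q) : ℝ :=
  μ0 (π 0) *
    ∏ i : Fin n,
      ∑ a,
        α.σ (List.ofFn (fun j : Fin (i.1 + 1) =>
            π ⟨i.1 - j.1, lt_of_le_of_lt (Nat.sub_le i.1 j.1) (Nat.lt_succ_of_lt i.isLt)⟩)) a *
          M.δ (π i.castSucc) a (π i.succ)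

/-- Distribution over states after `n` steps. -/
noncomputable def Mdist (M : MDP Q A) (μ0 : Q → ℝ) (α : Strat Q A) (n : ℕ) (q : Q) : ℝ :=
  ∑ π : Fin (n + 1) → Q, if π (Fin.last n) = q then pathProb M μ0 α π else 0

/-- Probability mass in `T` after `n` steps. -/
noncomputable def Mmass (M : MDP Q A) (μ0 : Q → ℝ) (α : Strat Q A) (n : ℕ) (T : Finset Q) : ℝ :=
  ∑ q ∈ T, Mdist M μ0 α n q

open scoped Classical in
/-- Support of the transition `δ(q,a)`. -/
noncomputable def post (M : MDP Q A) (q : Q) (a : A) : Finset Q :=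
  Finset.univ.filter (fun q' => 0 < M.δ q a q')

open scoped Classical in
/-- One-step predecessor operator. -/
noncomputable def PreM (M : MDP Q A) (S : Finset Q) : Finset Q :=
  Finset.univ.filter (fun q => ∃ a, post M q a ⊆ S)

def IsDist (μ : Q → ℝ) : Prop := (∀ q, 0 ≤ μ q) ∧ ∑ q, μ q = 1

def dirac (q0 : Q) : Q → ℝ := fun q => if q = q0 then (1 : ℝ) else 0

def PureStrat (α : Strat Q A) : Prop := ∀ h, ∃ a, α.σ h a = 1

open Filter Topology

section Paths

omit [DecidableEq Q]

variable (M : MDP Q A) (μ0 : Q → ℝ) (α : Strat Q A)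

def pathHistory {n : ℕ} (ρ : Fin (n + 1) → Q) : List Q :=
  List.ofFn fun j : Fin (n + 1) => ρ ⟨n - j.1, by omega⟩

omit [Fintype Q] in
lemma pathHistory_head? {n : ℕ} (ρ : Fin (n + 1) → Q) :
    (pathHistory ρ).head? = some (ρ (Fin.last n)) := by
  simp [pathHistory, List.ofFn_succ, Fin.last]

noncomputable def stepProb {n : ℕ} (ρ : Fin (n + 1) → Q) (q : Q) : ℝ :=
  ∑ a, α.σ (pathHistory ρ) a * M.δ (ρ (Fin.last n)) a q

lemma stepProb_nonneg {n : ℕ} (ρ : Fin (n + 1) → Q) (q : Q) : 0 ≤ stepProb M α ρ q :=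
  sum_nonneg fun a _ => mul_nonneg (α.nonneg _ a) (M.nonneg _ a q)

lemma sum_stepProb {n : ℕ} (ρ : Fin (n + 1) → Q) : ∑ q, stepProb M α ρ q = 1 := by
  simp only [stepProb]
  rw [sum_comm]
  simp only [← mul_sum, M.sum_one, mul_one, α.sum_one]

lemma pathProb_zero (π : Fin 1 → Q) : pathProb M μ0 α π = μ0 (π 0) := by
  simp [pathProb]

lemma pathProb_snoc {n : ℕ} (ρ : Fin (n + 1) → Q) (q : Q) :
    pathProb M μ0 α (Fin.snoc ρ q) = pathProb M μ0 α ρ * stepProb M α ρ q := by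
  have snoc_apply : ∀ (m : ℕ) (hm : m < n + 1),
      (Fin.snoc ρ q : Fin (n + 2) → Q) ⟨m, by omega⟩ = ρ ⟨m, hm⟩ :=
    fun m hm => Fin.snoc_castSucc (α := fun _ => Q) (i := ⟨m, hm⟩) ..
  have history : ∀ (k : ℕ) (hk : k < n + 1),
      (List.ofFn fun j : Fin (k + 1) => (Fin.snoc ρ q : Fin (n + 2) → Q) ⟨k - j.1, by omega⟩)
        = List.ofFn fun j : Fin (k + 1) => ρ ⟨k - j.1, by omega⟩ := by
    intro k hk
    congr 1
    funext j
    exact snoc_apply _ (by omega)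
  unfold pathProb stepProb pathHistory
  rw [Fin.prod_univ_castSucc, mul_assoc,
    show (Fin.snoc ρ q : Fin (n + 2) → Q) 0 = ρ 0 from snoc_apply 0 (by omega)]
  congr 2
  · refine prod_congr rfl fun i _ => ?_
    simp only [Fin.val_castSucc, Fin.succ_castSucc, Fin.snoc_castSucc, history i.1 (by omega)]
  · simp only [Fin.val_last, Fin.snoc_castSucc, Fin.succ_last, Fin.snoc_last, history n (by omega)]

variable {μ0} in
lemma pathProb_nonneg (hμ0 : ∀ q, 0 ≤ μ0 q) {n : ℕ} (π : Fin (n + 1) → Q) :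
    0 ≤ pathProb M μ0 α π :=
  mul_nonneg (hμ0 _) <| prod_nonneg fun _ _ =>
    sum_nonneg fun a _ => mul_nonneg (α.nonneg _ a) (M.nonneg _ a _)

lemma sum_pathProb (n : ℕ) : ∑ π : Fin (n + 1) → Q, pathProb M μ0 α π = ∑ q, μ0 q := by
  induction n with
  | zero =>
    rw [← (Equiv.funUnique (Fin 1) Q).symm.sum_comp]
    simp [pathProb_zero]
  | succ n ih =>
    rw [← (Fin.snocEquiv fun _ => Q).sum_comp, Fintype.sum_prod_type, sum_comm, ← ih]
    refine sum_congr rfl fun ρ _ => ?_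
    change ∑ q, pathProb M μ0 α (Fin.snoc ρ q) = _
    simp only [pathProb_snoc, ← mul_sum, sum_stepProb, mul_one]

end Paths

section Distribution

variable (M : MDP Q A) {μ0 : Q → ℝ} (α : Strat Q A)

lemma Mdist_nonneg (hμ0 : ∀ q, 0 ≤ μ0 q) (n : ℕ) (q : Q) : 0 ≤ Mdist M μ0 α n q :=
  sum_nonneg fun π _ => by
    split_ifs
    exacts [pathProb_nonneg M α hμ0 π, le_rfl]

variable (μ0) in
lemma sum_Mdist (n : ℕ) : ∑ q, Mdist M μ0 α n q = ∑ q, μ0 q := by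
  simp only [Mdist]
  rw [sum_comm]
  simp only [sum_ite_eq, mem_univ, if_true]
  exact sum_pathProb M μ0 α n

lemma pathProb_le_Mdist (hμ0 : ∀ q, 0 ≤ μ0 q) {n : ℕ} (π : Fin (n + 1) → Q) :
    pathProb M μ0 α π ≤ Mdist M μ0 α n (π (Fin.last n)) := by
  have h := single_le_sum (f := fun π' : Fin (n + 1) → Q =>
      if π' (Fin.last n) = π (Fin.last n) then pathProb M μ0 α π' else 0)
    (fun π' _ => by split_ifs <;> simp [pathProb_nonneg M α hμ0]) (mem_univ π)
  simpa [Mdist] using h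

variable (μ0) in
lemma Mmass_add_Mmass_compl (n : ℕ) (T : Finset Q) :
    Mmass M μ0 α n T + Mmass M μ0 α n Tᶜ = ∑ q, μ0 q := by
  rw [Mmass, Mmass, sum_add_sum_compl, sum_Mdist]

lemma Mmass_le_one (hμ : IsDist μ0) (n : ℕ) (T : Finset Q) : Mmass M μ0 α n T ≤ 1 := by
  have hcompl : 0 ≤ Mmass M μ0 α n Tᶜ := sum_nonneg fun q _ => Mdist_nonneg M α hμ.1 n q
  linarith [Mmass_add_Mmass_compl M μ0 α n T, hμ.2]

end Distribution

section SureWinning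

variable (M : MDP Q A) [Nonempty A]

-- `pathProb` never consults the empty history, so the default action chosen for it is irrelevant.
open scoped Classical in
noncomputable def Strat.memoryless (f : Q → A) : Strat Q A where
  σ h a := if h.head?.elim (Classical.arbitrary A) f = a then 1 else 0
  nonneg h a := by split_ifs <;> norm_num
  sum_one h := by simp

omit [DecidableEq Q] in
lemma stepProb_memoryless (f : Q → A) {n : ℕ} (ρ : Fin (n + 1) → Q) (q : Q) :
    stepProb M (Strat.memoryless f) ρ q = M.δ (ρ (Fin.last n)) (f (ρ (Fin.last n))) q := by
  simp only [stepProb, Strat.memoryless]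
  rw [pathHistory_head?, Option.elim_some, sum_eq_single (f (ρ (Fin.last n)))]
  · rw [if_pos rfl, one_mul]
  · intro a _ ha
    rw [if_neg (Ne.symm ha), zero_mul]
  · exact fun h => absurd (mem_univ _) h

omit [DecidableEq Q] in
lemma pathProb_memoryless_eq_zero_of_last_notMem {W : Finset Q} {f : Q → A}
    (hf : ∀ q ∈ W, post M q (f q) ⊆ W) {μ0 : Q → ℝ} (hμ0 : ∀ q ∉ W, μ0 q = 0) :
    ∀ {n : ℕ} (π : Fin (n + 1) → Q), π (Fin.last n) ∉ W →
      pathProb M μ0 (Strat.memoryless f) π = 0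
  | 0, π, hπ => by rw [pathProb_zero]; exact hμ0 _ hπ
  | n + 1, π, hπ => by
    rw [← Fin.snoc_init_self π, pathProb_snoc, stepProb_memoryless]
    by_cases hlast : Fin.init π (Fin.last n) ∈ W
    · have : π (Fin.last (n + 1)) ∉ post M _ (f _) := fun h => hπ (hf _ hlast h)
      simp only [post, mem_filter, mem_univ, true_and, not_lt] at this
      rw [le_antisymm this (M.nonneg _ _ _), mul_zero]
    · rw [pathProb_memoryless_eq_zero_of_last_notMem hf hμ0 _ hlast, zero_mul]

lemma Mmass_memoryless_eq_one {T W : Finset Q} (hWT : W ⊆ T) {f : Q → A}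
    (hf : ∀ q ∈ W, post M q (f q) ⊆ W) {μ0 : Q → ℝ} (hμ : IsDist μ0)
    (hμ0 : ∀ q ∉ W, μ0 q = 0) (n : ℕ) : Mmass M μ0 (Strat.memoryless f) n T = 1 := by
  have hcompl : Mmass M μ0 (Strat.memoryless f) n Tᶜ = 0 := by
    refine sum_eq_zero fun q hq => sum_eq_zero fun π _ => ?_
    split_ifs with hπ
    · subst hπ
      exact pathProb_memoryless_eq_zero_of_last_notMem M hf hμ0 π fun hW => mem_compl.1 hq (hWT hW)
    · rfl
  linarith [Mmass_add_Mmass_compl M μ0 (Strat.memoryless f) n T, hμ.2]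

end SureWinning

section Escape

variable (M : MDP Q A) (T : Finset Q)

lemma PreM_mono {S S' : Finset Q} (h : S ⊆ S') : PreM M S ⊆ PreM M S' := by
  intro q hq
  simp only [PreM, mem_filter, mem_univ, true_and] at hq ⊢
  obtain ⟨a, ha⟩ := hq
  exact ⟨a, ha.trans h⟩

-- States from which the controller can surely keep the next `k` states (current one first) in `T`.
noncomputable def safeStates : ℕ → Finset Q
  | 0 => univ
  | k + 1 => T ∩ PreM M (safeStates k)

lemma safeStates_antitone : Antitone (safeStates M T) := by
  refine antitone_nat_of_succ_le fun k => ?_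
  induction k with
  | zero => exact subset_univ _
  | succ k ih => exact inter_subset_inter subset_rfl (PreM_mono M ih)

lemma exists_safeStates_succ_eq : ∃ N, safeStates M T (N + 1) = safeStates M T N := by
  obtain ⟨N, hN⟩ := WellFoundedLT.antitone_chain_condition (safeStates_antitone M T)
  exact ⟨N, (hN (N + 1) N.le_succ).symm⟩

omit [Fintype Q] [DecidableEq Q] in
lemma Strat.exists_inv_card_le (α : Strat Q A) (h : List Q) :
    ∃ a, (Fintype.card A : ℝ)⁻¹ ≤ α.σ h a := by
  have hA : (univ : Finset A).Nonempty :=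
    nonempty_of_sum_ne_zero (s := univ) (f := α.σ h) (by rw [α.sum_one]; exact one_ne_zero)
  have : Nonempty A := univ_nonempty_iff.1 hA
  obtain ⟨a, -, ha⟩ := exists_le_of_sum_le hA (f := fun _ => (Fintype.card A : ℝ)⁻¹)
    (g := α.σ h) (by simp [α.sum_one, Fintype.card_ne_zero])
  exact ⟨a, ha⟩

omit [DecidableEq Q] in
lemma MDP.exists_pos_le_pos_δ (M : MDP Q A) :
    ∃ η, 0 < η ∧ η ≤ 1 ∧ ∀ q a q', 0 < M.δ q a q' → η ≤ M.δ q a q' := by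
  have hδ : ∀ q a q', ∀ᶠ η in 𝓝 (0 : ℝ), 0 < M.δ q a q' → η ≤ M.δ q a q' := fun q a q' => by
    by_cases h : 0 < M.δ q a q'
    · exact (eventually_le_nhds h).mono fun η hη _ => hη
    · exact Eventually.of_forall fun η h' => absurd h' h
  have hsmall : ∀ᶠ η in 𝓝 (0 : ℝ), η ≤ 1 ∧ ∀ q a q', 0 < M.δ q a q' → η ≤ M.δ q a q' :=
    (eventually_le_nhds one_pos).and (by simpa only [eventually_all] using hδ)
  obtain ⟨η, hη0, hη⟩ :=
    (eventually_mem_nhdsWithin.and (nhdsWithin_le_nhds hsmall) : ∀ᶠ η in 𝓝[>] (0 : ℝ), _).exists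
  exact ⟨η, hη0, hη⟩

def IsEscapeBound (α : Strat Q A) (β : ℝ) : Prop :=
  ∀ (S : Finset Q) {n : ℕ} (ρ : Fin (n + 1) → Q), ρ (Fin.last n) ∉ PreM M S →
    ∃ q ∉ S, β ≤ stepProb M α ρ q

lemma isEscapeBound_div_card {η : ℝ} (hη0 : 0 ≤ η)
    (hη : ∀ q a q', 0 < M.δ q a q' → η ≤ M.δ q a q') (α : Strat Q A) :
    IsEscapeBound M α (η / Fintype.card A) := by
  intro S n ρ hρ
  obtain ⟨a, ha⟩ := α.exists_inv_card_le (pathHistory ρ)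
  have : ¬ post M (ρ (Fin.last n)) a ⊆ S := fun h =>
    hρ (mem_filter.2 ⟨mem_univ _, a, h⟩)
  obtain ⟨q, hq, hqS⟩ := not_subset.1 this
  refine ⟨q, hqS, ?_⟩
  calc η / Fintype.card A = (Fintype.card A : ℝ)⁻¹ * η := by ring
    _ ≤ α.σ (pathHistory ρ) a * M.δ (ρ (Fin.last n)) a q :=
      mul_le_mul ha (hη _ _ _ (mem_filter.1 hq).2) hη0 (α.nonneg _ a)
    _ ≤ stepProb M α ρ q :=
      single_le_sum (fun a _ => mul_nonneg (α.nonneg _ a) (M.nonneg _ a q)) (mem_univ a)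

variable (α : Strat Q A) {μ0 : Q → ℝ} {β : ℝ}

lemma exists_exit_path_of_notMem_safeStates (hμ0 : ∀ q, 0 ≤ μ0 q) (hβ0 : 0 ≤ β)
    (hβ1 : β ≤ 1)
    (hβ : IsEscapeBound M α β) :
    ∀ (k : ℕ) {n : ℕ} (π : Fin (n + 1) → Q), π (Fin.last n) ∉ safeStates M T k →
      ∃ (m : ℕ) (π' : Fin (m + 1) → Q), π' (Fin.last m) ∉ T ∧
        pathProb M μ0 α π * β ^ k ≤ pathProb M μ0 α π'
  | 0, _, _, hπ => absurd (mem_univ _) hπ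
  | k + 1, n, π, hπ => by
    by_cases hT : π (Fin.last n) ∈ T
    · have hPre : π (Fin.last n) ∉ PreM M (safeStates M T k) := fun h =>
        hπ (mem_inter.2 ⟨hT, h⟩)
      obtain ⟨q, hq, hβq⟩ := hβ _ π hPre
      obtain ⟨m, π', hπ'T, hπ'⟩ :=
        exists_exit_path_of_notMem_safeStates hμ0 hβ0 hβ1 hβ k (Fin.snoc π q)
          (by rwa [Fin.snoc_last])
      refine ⟨m, π', hπ'T, le_trans ?_ hπ'⟩
      rw [pathProb_snoc, pow_succ', ← mul_assoc]
      exact mul_le_mul_of_nonneg_right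
        (mul_le_mul_of_nonneg_left hβq (pathProb_nonneg M α hμ0 π)) (pow_nonneg hβ0 k)
    · exact ⟨n, π, hT, mul_le_of_le_one_right (pathProb_nonneg M α hμ0 π) (pow_le_one₀ hβ0 hβ1)⟩

lemma exists_Mmass_le_of_notMem_safeStates (hμ : IsDist μ0) (hβ0 : 0 ≤ β) (hβ1 : β ≤ 1)
    (hβ : IsEscapeBound M α β)
    {k : ℕ} {q₀ : Q} (hq₀ : q₀ ∉ safeStates M T k) :
    ∃ m, Mmass M μ0 α m T ≤ 1 - μ0 q₀ * β ^ k := by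
  obtain ⟨m, π, hπT, hπ⟩ :=
    exists_exit_path_of_notMem_safeStates M T α hμ.1 hβ0 hβ1 hβ k (fun _ : Fin 1 => q₀) hq₀
  rw [pathProb_zero] at hπ
  have hexit : pathProb M μ0 α π ≤ Mmass M μ0 α m Tᶜ :=
    (pathProb_le_Mdist M α hμ.1 π).trans
      (single_le_sum (fun q _ => Mdist_nonneg M α hμ.1 m q) (mem_compl.2 hπT))
  exact ⟨m, by linarith [Mmass_add_Mmass_compl M μ0 α m T, hμ.2]⟩

end Escape

lemma exists_sure_of_limit_sure [Nonempty A] (M : MDP Q A) (T : Finset Q) {μ0 : Q → ℝ}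
    (hμ : IsDist μ0) (hls : ∀ ε : ℝ, 0 < ε → ∃ α : Strat Q A, ∀ n, 1 - ε ≤ Mmass M μ0 α n T) :
    ∃ α : Strat Q A, ∀ n, Mmass M μ0 α n T = 1 := by
  obtain ⟨N, hN⟩ := exists_safeStates_succ_eq M T
  set W := safeStates M T N
  have hW : W = T ∩ PreM M W := hN.symm
  by_cases hsupp : ∀ q ∉ W, μ0 q = 0
  · refine ⟨Strat.memoryless fun q => Classical.epsilon fun a => post M q a ⊆ W,
      Mmass_memoryless_eq_one M (hW ▸ inter_subset_left) (fun q hq => ?_) hμ hsupp⟩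
    have hpre : q ∈ PreM M W := mem_of_mem_inter_right (hW ▸ hq)
    exact Classical.epsilon_spec (mem_filter.1 hpre).2
  push Not at hsupp
  obtain ⟨q₀, hq₀W, hq₀⟩ := hsupp
  obtain ⟨η, hη0, hη1, hη⟩ := M.exists_pos_le_pos_δ
  have hA : (1 : ℝ) ≤ Fintype.card A := by exact_mod_cast Fintype.card_pos
  have hβ0 : 0 < η / Fintype.card A := by positivity
  have hβ1 : η / Fintype.card A ≤ 1 := div_le_one_of_le₀ (hη1.trans hA) (by positivity)
  have hgap : 0 < μ0 q₀ * (η / Fintype.card A) ^ N :=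
    mul_pos ((hμ.1 q₀).lt_of_ne' hq₀) (pow_pos hβ0 N)
  obtain ⟨α, hα⟩ := hls _ (half_pos hgap)
  obtain ⟨m, hm⟩ := exists_Mmass_le_of_notMem_safeStates M T α hμ hβ0.le hβ1
    (isEscapeBound_div_card M hη0.le hη α) hq₀W
  linarith [hα m]

theorem always_sync_modes_coincide_general {Q A : Type} [Fintype Q] [DecidableEq Q]
    [Fintype A] [Nonempty A]
    (M : MDP Q A) (T : Finset Q) :
    {μ0 : Q → ℝ | IsDist μ0 ∧ ∃ α : Strat Q A, ∀ n, Mmass M μ0 α n T = 1} =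
      {μ0 : Q → ℝ | IsDist μ0 ∧ ∃ α : Strat Q A,
        ∀ ε : ℝ, 0 < ε → ∀ n, 1 - ε ≤ Mmass M μ0 α n T} ∧
    {μ0 : Q → ℝ | IsDist μ0 ∧ ∃ α : Strat Q A, ∀ n, Mmass M μ0 α n T = 1} =
      {μ0 : Q → ℝ | IsDist μ0 ∧ ∀ ε : ℝ, 0 < ε → ∃ α : Strat Q A,
        ∀ n, 1 - ε ≤ Mmass M μ0 α n T} := by
  refine ⟨Set.ext fun μ0 => ⟨?_, ?_⟩, Set.ext fun μ0 => ⟨?_, ?_⟩⟩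
  · rintro ⟨hμ, α, hα⟩
    exact ⟨hμ, α, fun ε hε n => by rw [hα n]; linarith⟩
  · rintro ⟨hμ, α, hα⟩
    refine ⟨hμ, α, fun n => le_antisymm (Mmass_le_one M α hμ n T) ?_⟩
    exact le_of_forall_pos_le_add fun ε hε => by linarith [hα ε hε n]
  · rintro ⟨hμ, α, hα⟩
    exact ⟨hμ, fun ε hε => ⟨α, fun n => by rw [hα n]; linarith⟩⟩
  · rintro ⟨hμ, hls⟩
    exact ⟨hμ, exists_sure_of_limit_sure M T hμ hls⟩

/-- For the always synchronizing objective with function `sum_T`, the three winning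
modes coincide: the sets of initial distributions that are sure winning
(`∃α, ∀n, M^α_n(T) = 1`), almost-sure winning (`∃α, inf_n M^α_n(T) = 1`), and
limit-sure winning (`∀ε>0, ∃α, ∀n, M^α_n(T) ≥ 1−ε`) are equal. -/
theorem always_sync_modes_coincide {Q A : Type} [Fintype Q] [DecidableEq Q]
    [Fintype A] [Nonempty Q] [Nonempty A]
    (M : MDP Q A) (T : Finset Q) :
    {μ0 : Q → ℝ | IsDist μ0 ∧ ∃ α : Strat Q A, ∀ n, Mmass M μ0 α n T = 1} =
      {μ0 : Q → ℝ | IsDist μ0 ∧ ∃ α : Strat Q A,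
        ∀ ε : ℝ, 0 < ε → ∀ n, 1 - ε ≤ Mmass M μ0 α n T} ∧
    {μ0 : Q → ℝ | IsDist μ0 ∧ ∃ α : Strat Q A, ∀ n, Mmass M μ0 α n T = 1} =
      {μ0 : Q → ℝ | IsDist μ0 ∧ ∀ ε : ℝ, 0 < ε → ∃ α : Strat Q A,
        ∀ n, 1 - ε ≤ Mmass M μ0 α n T} :=
  always_sync_modes_coincide_general M T
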